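/- Fix a system of positive coset-depending weights w. The set 𝒢_P^{cw} of payoff tuples c = (c_1,…,c_n) that are coset weighted potential games with respect to w is a linear subspace of the space 𝒢 of all games, and its dimension equals k + Σ_{j=1}^n k/k_j − 1, where k = Π_{i=1}^n k_i. -/
import Mathlib


/-- `f : S → ℝ` depends only on the strategies of the players other than `i`
(i.e. it is a function of `s_{-i}`). -/
def IndepOf {n : ℕ} {k : Fin n → ℕ} (i : Fin n) (f : (∀ j, Fin (k j)) → ℝ) : Prop :=
  ∀ (s : ∀ j, Fin (k j)) (x : Fin (k i)), f (Function.update s i x) = f s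

/-- `P` is a coset weighted potential function for the game `c` with respect to the
coset-depending weights `w`. -/
def IsCWPotentialFn {n : ℕ} {k : Fin n → ℕ} (c w : Fin n → (∀ j, Fin (k j)) → ℝ)
    (P : (∀ j, Fin (k j)) → ℝ) : Prop :=
  ∀ (i : Fin n) (s : ∀ j, Fin (k j)) (x y : Fin (k i)),
    c i (Function.update s i x) - c i (Function.update s i y)
      = w i s * (P (Function.update s i x) - P (Function.update s i y))


variable {n : ℕ} {k : Fin n → ℕ}

def Dsub (k : Fin n → ℕ) (i : Fin n) : Submodule ℝ ((∀ j, Fin (k j)) → ℝ) where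
  carrier := {f | IndepOf i f}
  add_mem' := by intro a b ha hb s x; simp [ha s x, hb s x]
  zero_mem' := by intro s x; rfl
  smul_mem' := by intro c a ha s x; simp [ha s x]

def Lmap (w : Fin n → (∀ j, Fin (k j)) → ℝ) :
    ((((∀ j, Fin (k j)) → ℝ) × (∀ i, Dsub k i))) →ₗ[ℝ]
      (Fin n → (∀ j, Fin (k j)) → ℝ) where
  toFun Pd := fun i s => w i s * Pd.1 s + (Pd.2 i : (∀ j, Fin (k j)) → ℝ) s
  map_add' := by intro a b; funext i s; simp; ring
  map_smul' := by intro c a; funext i s; simp; ring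

-- linear equiv for Dsub dimension
noncomputable def DsubEquiv (hk : ∀ i, 2 ≤ k i) (i : Fin n) :
    (Dsub k i) ≃ₗ[ℝ] ((∀ j : {j // j ≠ i}, Fin (k j.1)) → ℝ) where
  toFun f := fun t => (f : (∀ j, Fin (k j)) → ℝ)
    (fun j => if h : j = i then ⟨0, Nat.lt_of_lt_of_le Nat.zero_lt_two (hk j)⟩ else t ⟨j, h⟩)
  map_add' := by intro a b; rfl
  map_smul' := by intro c a; rfl
  invFun g := ⟨fun s => g (fun j => s j.1), by
    intro s x
    have h : (fun (j : {j // j ≠ i}) => (Function.update s i x) j.1)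
        = fun (j : {j // j ≠ i}) => s j.1 := by
      funext j; exact Function.update_of_ne j.2 _ _
    simp only [h]⟩

  left_inv := by
    intro f
    apply Subtype.ext
    funext s
    have h1 : (fun j => if h : j = i then (⟨0, by have := hk j; omega⟩ : Fin (k j)) else s j)
        = Function.update s i ⟨0, by have := hk i; omega⟩ := by
      funext j
      by_cases h : j = i
      · subst h; simp
      · simp [h, Function.update_of_ne h]
    simp only
    rw [h1]
    exact f.2 s _
  right_inv := by
    intro g
    funext t
    have h : (fun (j : {j // j ≠ i}) =>
        if hj : (j : Fin n) = i then (⟨0, Nat.lt_of_lt_of_le Nat.zero_lt_two (hk j)⟩ : Fin (k j))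
        else t ⟨j, hj⟩) = t := by
      funext j
      simp [dif_neg j.2]
    exact congrArg g h

lemma finrank_Dsub (hk : ∀ i, 2 ≤ k i) (i : Fin n) :
    Module.finrank ℝ (Dsub k i) = (∏ j, k j) / k i := by
  rw [(DsubEquiv hk i).finrank_eq, Module.finrank_pi, Fintype.card_pi]
  simp only [Fintype.card_fin]
  rw [← Finset.prod_subtype (p := fun j => j ≠ i) (Finset.univ.erase i) (fun x => by simp) k, ← Nat.mul_div_cancel_left (∏ j ∈ Finset.univ.erase i, k j)
    (show 0 < k i by have := hk i; omega), Finset.mul_prod_erase Finset.univ k (Finset.mem_univ i)]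

lemma const_of_indep (P : (∀ j, Fin (k j)) → ℝ) (h : ∀ i, IndepOf i P)
    (s t : ∀ j, Fin (k j)) : P s = P t := by
  classical
  have key : ∀ A : Finset (Fin n), P (fun j => if j ∈ A then t j else s j) = P s := by
    intro A
    induction A using Finset.induction_on with
    | empty => simp
    | @insert a A haA ih =>
      have h1 : (fun j => if j ∈ insert a A then t j else s j)
          = Function.update (fun j => if j ∈ A then t j else s j) a (t a) := by
        funext j
        by_cases hj : j = a
        · subst hj; simp
        · simp [Function.update_of_ne hj, hj]
      rw [h1, h a _ (t a), ih]
  have h2 := key Finset.univ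
  simp only [Finset.mem_univ, if_true] at h2
  exact h2.symm


/-- **Dimension claim of Theorem 3.2.** For a fixed system of positive coset-depending
weights `w`, the set of coset weighted potential games w.r.t. `w` is a linear subspace
of the space of all games, of dimension `k + Σ_j k/k_j − 1` where `k = Π_i k_i`. -/
theorem cwpg_subspace_dim (n : ℕ) (hn : 2 ≤ n) (k : Fin n → ℕ)
    (hk : ∀ i, 2 ≤ k i) (w : Fin n → (∀ j, Fin (k j)) → ℝ)
    (hw : ∀ i s, 0 < w i s) (hwI : ∀ i, IndepOf i (w i)) :
    ∃ V : Submodule ℝ (Fin n → (∀ j, Fin (k j)) → ℝ),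
      (∀ c, c ∈ V ↔ ∃ P, IsCWPotentialFn c w P) ∧
      Module.finrank ℝ V = (∏ i, k i) + (∑ j, (∏ i, k i) / k j) - 1 := by
  classical
  refine ⟨LinearMap.range (Lmap w), ?_, ?_⟩
  · intro c
    constructor
    · rintro ⟨⟨P, d⟩, rfl⟩
      refine ⟨P, fun i s x y => ?_⟩
      have hdx := (d i).2 s x
      have hdy := (d i).2 s y
      simp only [Lmap, LinearMap.coe_mk, AddHom.coe_mk, hwI i s x, hwI i s y, hdx, hdy]
      ring
    · rintro ⟨P, hP⟩
      refine ⟨⟨P, fun i => ⟨fun s => c i s - w i s * P s, ?_⟩⟩, ?_⟩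
      · intro s x
        have h1 := hP i s x (s i)
        rw [Function.update_eq_self, mul_sub] at h1
        simp only
        rw [hwI i s x]
        linarith
      · funext i s
        simp only [Lmap, LinearMap.coe_mk, AddHom.coe_mk]
        ring
  · set s0 : ∀ j, Fin (k j) := fun j => ⟨0, Nat.lt_of_lt_of_le Nat.zero_lt_two (hk j)⟩ with hs0
    set v : (((∀ j, Fin (k j)) → ℝ) × (∀ i, Dsub k i)) :=
      ((fun _ => (1:ℝ)), fun i => ⟨fun s => -(w i s), by
        intro s x; simp [hwI i s x]⟩) with hv
    have hv0 : v ≠ 0 := by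
      intro h
      have := congrFun (congrArg Prod.fst h) s0
      simp [hv] at this
    have hker : LinearMap.ker (Lmap w) = Submodule.span ℝ {v} := by
      apply le_antisymm
      · rintro ⟨P, d⟩ hpd
        have heq : ∀ i s, w i s * P s + (d i : (∀ j, Fin (k j)) → ℝ) s = 0 := by
          intro i s
          have h0 := congrFun (congrFun (LinearMap.mem_ker.mp hpd) i) s
          simpa [Lmap] using h0
        have hPind : ∀ i, IndepOf i P := by
          intro i s x
          have h1 := heq i (Function.update s i x)
          have h2 := heq i s
          rw [hwI i s x, (d i).2 s x] at h1
          have hw' := (hw i s).ne'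
          have h3 : w i s * P (Function.update s i x) = w i s * P s := by linarith
          exact mul_left_cancel₀ hw' h3
        have hconst : ∀ s, P s = P s0 := fun s => const_of_indep P hPind s s0
        have he : (P, d) = (P s0) • v := by
          have e1 : P = (P s0) • (fun _ => (1:ℝ)) := by
            funext s; simp [hconst s]
          have e2 : d = (P s0) • v.2 := by
            funext i
            apply Subtype.ext
            funext s
            have h4 := heq i s
            rw [hconst s] at h4
            have h5 : (d i : (∀ j, Fin (k j)) → ℝ) s = -(w i s * P s0) := by linarith
            simp [hv, h5]
            ring
          exact Prod.ext e1 e2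
        rw [he]
        exact Submodule.smul_mem _ _ (Submodule.mem_span_singleton_self v)
      · rw [Submodule.span_le, Set.singleton_subset_iff]
        refine LinearMap.mem_ker.mpr ?_
        funext i s
        simp [Lmap, hv]
    have h1 := LinearMap.finrank_range_add_finrank_ker (Lmap (k := k) w)
    rw [hker, finrank_span_singleton hv0] at h1
    have hdom : Module.finrank ℝ ((((∀ j, Fin (k j)) → ℝ) × (∀ i, Dsub k i)))
        = (∏ i, k i) + ∑ j, (∏ i, k i) / k j := by
      rw [Module.finrank_prod, Module.finrank_pi ℝ, Fintype.card_pi,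
        Module.finrank_pi_fintype ℝ]
      congr 1
      · simp
      · exact Finset.sum_congr rfl fun j _ => finrank_Dsub hk j
    rw [hdom] at h1
    omega
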